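/- Let n = p q^b with p, q distinct primes and b ≥ 2, and let s be an integer with 1 < s ≤ b. Let x ∈ Z_n have additive order q and let y ∈ Z_n have additive order q^s. Then the degree of x in the power graph P(Z_n) is strictly greater than the degree of y. -/

import Mathlib

/-! In a finite cyclic group, `w` is a positive multiple of `x` exactly when the order of `w`
divides the order of `x`, so adjacency in the power graph only depends on the orders of the two
vertices and on divisibility between them. Every neighbour `z ≠ x` of `y` (order `q^s`) has order
dividing `q^s`, hence equal to `1` or divisible by `q`, or a multiple of `q^s`; in each case `z`
is a neighbour of `x` (order `q`). An element of order `pq` is a neighbour of `x` but not of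
`y`, so `N(y) \ {x}` is a proper subset of `N(x) \ {y}`. -/

/-- The power graph of `ZMod n`: distinct `x`, `y` are adjacent iff one is a
positive multiple (i.e. a positive "power" in additive notation) of the other. -/
def powerGraph (n : ℕ) : SimpleGraph (ZMod n) :=
  SimpleGraph.fromRel (fun x y => ∃ m : ℕ, 0 < m ∧ y = m • x)

namespace IsAddCyclic

variable {G : Type*} [AddCommGroup G] [IsAddCyclic G] [Finite G]

theorem zmultiples_eq_ker_nsmul (x : G) :
    AddSubgroup.zmultiples x = (nsmulAddMonoidHom (addOrderOf x) : G →+ G).ker := by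
  refine AddSubgroup.eq_of_le_of_card_ge ?_ ?_
  · rw [AddSubgroup.zmultiples_le]
    exact addOrderOf_nsmul_eq_zero x
  · rw [card_nsmulAddMonoidHom_ker, Nat.card_zmultiples,
      Nat.gcd_eq_right (addOrderOf_dvd_natCard x)]

theorem mem_zmultiples_iff_addOrderOf_dvd {x w : G} :
    w ∈ AddSubgroup.zmultiples x ↔ addOrderOf w ∣ addOrderOf x := by
  rw [zmultiples_eq_ker_nsmul, AddMonoidHom.mem_ker, nsmulAddMonoidHom_apply,
    addOrderOf_dvd_iff_nsmul_eq_zero]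

theorem exists_pos_nsmul_eq_iff_addOrderOf_dvd {x w : G} :
    (∃ m : ℕ, 0 < m ∧ w = m • x) ↔ addOrderOf w ∣ addOrderOf x := by
  rw [← mem_zmultiples_iff_addOrderOf_dvd, ← mem_multiples_iff_mem_zmultiples,
    AddSubmonoid.mem_multiples_iff]
  constructor
  · rintro ⟨m, -, rfl⟩
    exact ⟨m, rfl⟩
  · rintro ⟨m, rfl⟩
    -- shifting by the order makes the multiplier positive without changing the multiple
    refine ⟨m + addOrderOf x, by have := addOrderOf_pos x; omega, ?_⟩
    rw [add_nsmul, addOrderOf_nsmul_eq_zero, add_zero]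

end IsAddCyclic

theorem ZMod.addOrderOf_natCast_div {n d : ℕ} (hn : n ≠ 0) (hd : d ∣ n) :
    addOrderOf ((n / d : ℕ) : ZMod n) = d := by
  rw [ZMod.addOrderOf_coe _ hn, Nat.gcd_eq_right (Nat.div_dvd_of_dvd hd), Nat.div_div_self hd hn]

theorem Nat.Prime.dvd_or_dvd_of_dvd_or_dvd_pow {q s d : ℕ} (hq : q.Prime) (hs : s ≠ 0)
    (h : d ∣ q ^ s ∨ q ^ s ∣ d) : d ∣ q ∨ q ∣ d := by
  rcases h with h | h
  · obtain ⟨k, -, rfl⟩ := (Nat.dvd_prime_pow hq).mp h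
    rcases k with _ | k
    · simp
    · exact Or.inr (dvd_pow_self q k.succ_ne_zero)
  · exact Or.inr ((dvd_pow_self q hs).trans h)

theorem SimpleGraph.card_neighborSet_lt_of_ssubset {V : Type*} [Finite V] (G : SimpleGraph V)
    {x y : V} (hxy : G.Adj x y) (h : G.neighborSet y \ {x} ⊂ G.neighborSet x \ {y}) :
    Nat.card (G.neighborSet y) < Nat.card (G.neighborSet x) := by
  rw [Nat.card_coe_set_eq, Nat.card_coe_set_eq,
    ← Set.ncard_sdiff_singleton_add_one (G.mem_neighborSet y x |>.mpr hxy.symm),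
    ← Set.ncard_sdiff_singleton_add_one (G.mem_neighborSet x y |>.mpr hxy)]
  exact Nat.add_lt_add_right (Set.ncard_lt_ncard h) 1

theorem powerGraph_adj_iff {n : ℕ} [NeZero n] {a b : ZMod n} :
    (powerGraph n).Adj a b ↔
      a ≠ b ∧ (addOrderOf b ∣ addOrderOf a ∨ addOrderOf a ∣ addOrderOf b) := by
  rw [powerGraph, SimpleGraph.fromRel_adj, IsAddCyclic.exists_pos_nsmul_eq_iff_addOrderOf_dvd,
    IsAddCyclic.exists_pos_nsmul_eq_iff_addOrderOf_dvd]

theorem powerGraph_card_neighborSet_lt {n q s : ℕ} [NeZero n] (hq : q.Prime) {x y w : ZMod n}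
    (hx : addOrderOf x = q) (hy : addOrderOf y = q ^ s) (hqw : q ∣ addOrderOf w)
    (hw_not_dvd : ¬ addOrderOf w ∣ q ^ s) (hqs_not_dvd : ¬ q ^ s ∣ addOrderOf w) :
    Nat.card ((powerGraph n).neighborSet y) < Nat.card ((powerGraph n).neighborSet x) := by
  have hs : s ≠ 0 := by
    rintro rfl
    exact hqs_not_dvd (one_dvd _)
  have hxy : x ≠ y := by
    rintro rfl
    rw [← hy, hx] at hqs_not_dvd
    exact hqs_not_dvd hqw
  have hadj : (powerGraph n).Adj x y :=
    powerGraph_adj_iff.mpr ⟨hxy, by rw [hx, hy]; exact Or.inr (dvd_pow_self q hs)⟩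
  refine (powerGraph n).card_neighborSet_lt_of_ssubset hadj ?_
  refine (Set.ssubset_iff_of_subset ?_).mpr ⟨w, ⟨?adj_xw, ?ne_wy⟩, fun hw => ?not_adj_yw⟩
  · rintro z ⟨hyz, hzx⟩
    obtain ⟨hyz, hz⟩ := powerGraph_adj_iff.mp hyz
    refine ⟨powerGraph_adj_iff.mpr ⟨Ne.symm hzx, ?_⟩, fun hzy => hyz hzy.symm⟩
    rw [hy] at hz
    rw [hx]
    exact hq.dvd_or_dvd_of_dvd_or_dvd_pow hs hz
  case adj_xw =>
    refine powerGraph_adj_iff.mpr ⟨?_, by rw [hx]; exact Or.inr hqw⟩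
    rintro rfl
    exact hw_not_dvd (hx ▸ dvd_pow_self q hs)
  case ne_wy =>
    rintro rfl
    exact hqs_not_dvd (hy ▸ dvd_rfl)
  case not_adj_yw =>
    obtain ⟨-, h⟩ := powerGraph_adj_iff.mp hw.1
    rw [hy] at h
    exact h.elim hw_not_dvd hqs_not_dvd

theorem degree_order_q_gt_order_qs_general (p q b : ℕ) (hp : p.Prime) (hq : q.Prime)
    (hpq : p ≠ q) (hb : 2 ≤ b)
    (n : ℕ) (hn : n = p * q ^ b)
    (s : ℕ) (hs1 : 1 < s)
    (x y : ZMod n) (hx : addOrderOf x = q) (hy : addOrderOf y = q ^ s) :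
    Nat.card ((powerGraph n).neighborSet y) < Nat.card ((powerGraph n).neighborSet x) := by
  have hn0 : n ≠ 0 := hn ▸ mul_ne_zero hp.ne_zero (pow_ne_zero b hq.ne_zero)
  have : NeZero n := ⟨hn0⟩
  have hw : addOrderOf ((n / (p * q) : ℕ) : ZMod n) = p * q :=
    ZMod.addOrderOf_natCast_div hn0 (hn ▸ mul_dvd_mul_left p (dvd_pow_self q (by omega)))
  have hp_not_dvd : ¬ p ∣ q ^ s := fun h =>
    hpq ((Nat.prime_dvd_prime_iff_eq hp hq).mp (hp.dvd_of_dvd_pow h))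
  have hqs_not_dvd : ¬ q ^ s ∣ p * q := fun h => by
    have hqs : q ^ s ∣ q ^ 1 :=
      (Nat.Coprime.pow_left s ((Nat.coprime_primes hq hp).mpr hpq.symm)).dvd_of_dvd_mul_left
        (by rwa [pow_one])
    exact absurd ((Nat.pow_dvd_pow_iff_le_right hq.one_lt).mp hqs) (by omega)
  refine powerGraph_card_neighborSet_lt (w := ((n / (p * q) : ℕ) : ZMod n)) hq hx hy ?_ ?_ ?_
    <;> rw [hw]
  · exact dvd_mul_left q p
  · exact hp_not_dvd ∘ dvd_of_mul_right_dvd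
  · exact hqs_not_dvd

/-- Subcase 2.1: for `n = p q^b` with `p ≠ q` primes, `b ≥ 2`, and `1 < s ≤ b`,
an element of order `q` has strictly larger degree in the power graph of `ZMod n`
than an element of order `q^s`. -/
theorem degree_order_q_gt_order_qs (p q b : ℕ) (hp : p.Prime) (hq : q.Prime)
    (hpq : p ≠ q) (hb : 2 ≤ b)
    (n : ℕ) (hn : n = p * q ^ b)
    (s : ℕ) (hs1 : 1 < s) (hs2 : s ≤ b)
    (x y : ZMod n) (hx : addOrderOf x = q) (hy : addOrderOf y = q ^ s) :
    Nat.card ((powerGraph n).neighborSet y) < Nat.card ((powerGraph n).neighborSet x) :=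
  degree_order_q_gt_order_qs_general p q b hp hq hpq hb n hn s hs1 x y hx hy
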